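/- If ρ is primitive and admits a continuous natural length function ℓ > 0 with Mℓ = λℓ (λ = r > 1), then there exist constants α, β > 0 with α λ^n ≤ |ρ^n(a)| ≤ β λ^n for all a ∈ A and n ∈ ℕ; moreover for every non-empty open U ⊆ A there exist α(U), β(U) > 0 and p such that the number of letters of ρ^n(a) lying in U is between α(U)λ^n and β(U)λ^n for all a and all n > p. -/

import Mathlib

open Filter Topology

/-- The left shift on bi-infinite sequences. -/
def shift {A : Type*} (w : ℤ → A) : ℤ → A := fun i => w (i + 1)

/-- The finite subword of `w` of length `n` starting at position `j`. -/
def word {A : Type*} (w : ℤ → A) (j : ℤ) (n : ℕ) : List A :=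
  (List.range n).map fun i => w (j + (i : ℤ))

/-- The subshift determined by a language `L ⊆ A*`. -/
def subshiftOf {A : Type*} (L : Set (List A)) : Set (ℤ → A) :=
  {w | ∀ (j : ℤ) (n : ℕ), word w j n ∈ L}

/-- The set of finite subwords of a bi-infinite sequence. -/
def subwordsOf {A : Type*} (w : ℤ → A) : Set (List A) :=
  {u | ∃ (j : ℤ) (n : ℕ), u = word w j n}

/-- The language of a bi-infinite sequence: the closure of its set of finite subwords. -/
def langOfSeq {A : Type*} [TopologicalSpace A] (w : ℤ → A) : Set (List A) :=
  closure (subwordsOf w)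

/-- The shift orbit of a bi-infinite sequence. -/
def orbit {A : Type*} (w : ℤ → A) : Set (ℤ → A) :=
  {x | ∃ k : ℤ, x = fun i => w (i + k)}

/-- Application of a substitution to a finite word, by concatenation. -/
def substWord {A : Type*} (ρ : A → List A) (u : List A) : List A := u.flatMap ρ

/-- The `n`-th iterated substitute (level-`n` supertile) of a letter. -/
def substIter {A : Type*} (ρ : A → List A) (n : ℕ) (a : A) : List A :=
  (substWord ρ)^[n] [a]

/-- The language of a substitution: closure of the set of words generated by `ρ`. -/
def lang {A : Type*} [TopologicalSpace A] (ρ : A → List A) : Set (List A) :=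
  closure {u : List A | ∃ (a : A) (k : ℕ), u <:+: substIter ρ k a}

/-- The legal `n`-letter words of a substitution. -/
def langN {A : Type*} [TopologicalSpace A] (ρ : A → List A) (n : ℕ) : Set (List A) :=
  closure {u : List A | u.length = n ∧ ∃ (a : A) (k : ℕ), u <:+: substIter ρ k a}

/-- Primitivity of a substitution on a topological alphabet. -/
def Primitive {A : Type*} [TopologicalSpace A] (ρ : A → List A) : Prop :=
  ∀ U : Set A, IsOpen U → U.Nonempty → ∃ p : ℕ, ∀ a : A, ∃ b ∈ substIter ρ p a, b ∈ U

/-- `y` is the image of the bi-infinite sequence `w` under the substitution `ρ`,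
with the image of `w 0` starting at position `0`. -/
def IsSubstOf {A : Type*} (ρ : A → List A) (w y : ℤ → A) : Prop :=
  ∃ o : ℤ → ℤ, o 0 = 0 ∧ (∀ k : ℤ, o (k + 1) = o k + (ρ (w k)).length) ∧
    ∀ (k : ℤ) (i : ℕ) (h : i < (ρ (w k)).length), y (o k + (i : ℤ)) = (ρ (w k)).get ⟨i, h⟩

section Aux

variable {A : Type*} (ρ : A → List A)

lemma substWord_append (u v : List A) :
    substWord ρ (u ++ v) = substWord ρ u ++ substWord ρ v := by
  simp [substWord]

lemma substWord_iter_nil (p : ℕ) : (substWord ρ)^[p] ([] : List A) = [] := by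
  induction p with
  | zero => rfl
  | succ p ih => rw [Function.iterate_succ_apply, show substWord ρ [] = [] from rfl, ih]

lemma substWord_iter_append (p : ℕ) (u v : List A) :
    (substWord ρ)^[p] (u ++ v) = (substWord ρ)^[p] u ++ (substWord ρ)^[p] v := by
  induction p generalizing u v with
  | zero => simp
  | succ p ih => rw [Function.iterate_succ_apply, substWord_append, ih,
      Function.iterate_succ_apply, Function.iterate_succ_apply]

lemma substWord_iter_flatMap (p : ℕ) (u : List A) :
    (substWord ρ)^[p] u = u.flatMap (substIter ρ p) := by
  induction u with
  | nil => simp [substWord_iter_nil]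
  | cons a u ih =>
      rw [show (a :: u) = [a] ++ u from rfl, substWord_iter_append, ih]
      simp [substIter]

lemma substIter_add (p m : ℕ) (a : A) :
    substIter ρ (p + m) a = (substIter ρ m a).flatMap (substIter ρ p) := by
  rw [substIter, Function.iterate_add_apply]
  exact substWord_iter_flatMap ρ p _

lemma sum_map_flatMap (g : A → ℝ) (f : A → List A) (u : List A) :
    ((u.flatMap f).map g).sum = (u.map (fun b => ((f b).map g).sum)).sum := by
  induction u with
  | nil => simp
  | cons a u ih => simp [List.flatMap_cons, ih]

lemma sum_map_bounds (g : A → ℝ) (c C : ℝ) (hc : ∀ a, c ≤ g a) (hC : ∀ a, g a ≤ C)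
    (u : List A) : c * u.length ≤ (u.map g).sum ∧ (u.map g).sum ≤ C * u.length := by
  induction u with
  | nil => simp
  | cons a u ih =>
      simp only [List.map_cons, List.sum_cons, List.length_cons]
      push_cast
      constructor
      · nlinarith [hc a, ih.1]
      · nlinarith [hC a, ih.2]

lemma sum_substWord (l : A → ℝ) (lam : ℝ)
    (heig : ∀ a : A, ((ρ a).map l).sum = lam * l a) (u : List A) :
    ((substWord ρ u).map l).sum = lam * (u.map l).sum := by
  induction u with
  | nil => simp [substWord]
  | cons a u ih =>
      rw [show (a :: u) = [a] ++ u from rfl, substWord_append]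
      simp only [List.map_append, List.sum_append, List.map_cons, List.sum_cons] at *
      rw [ih]
      have : substWord ρ [a] = ρ a := by simp [substWord]
      rw [this, heig a]
      simp
      ring

lemma sum_substIter (l : A → ℝ) (lam : ℝ)
    (heig : ∀ a : A, ((ρ a).map l).sum = lam * l a) (n : ℕ) (a : A) :
    ((substIter ρ n a).map l).sum = lam ^ n * l a := by
  induction n with
  | zero => simp [substIter]
  | succ n ih =>
      rw [substIter, Function.iterate_succ_apply', ← substIter,
        sum_substWord ρ l lam heig, ih, pow_succ]
      ring

end Aux

/-- If `ρ` is primitive and admits a continuous strictly positive natural length function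
`ℓ` with `Mℓ = λℓ` (`λ = r > 1`), then `α λ^n ≤ |ρ^n(a)| ≤ β λ^n` for positive constants
`α, β`, and for every non-empty open `U ⊆ A` the number of letters of `ρ^n(a)` lying in `U`
is between `α(U) λ^n` and `β(U) λ^n` for all `a` and all `n > p`. -/
theorem stmt19 {A : Type*} [TopologicalSpace A] [CompactSpace A] [T2Space A] [Nonempty A]
    (ρ : A → List A) (hρ : Continuous ρ) (h1 : ∀ a : A, 1 ≤ (ρ a).length)
    (hprim : Primitive ρ) (l : C(A, ℝ)) (hpos : ∀ a : A, 0 < l a)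
    (lam : ℝ) (hlam : 1 < lam)
    (heig : ∀ a : A, ((ρ a).map (fun b => l b)).sum = lam * l a) :
    (∃ α β : ℝ, 0 < α ∧ 0 < β ∧ ∀ (a : A) (n : ℕ),
      α * lam ^ n ≤ ((substIter ρ n a).length : ℝ) ∧
      ((substIter ρ n a).length : ℝ) ≤ β * lam ^ n) ∧
    ∀ U : Set A, IsOpen U → U.Nonempty →
      ∃ α β : ℝ, 0 < α ∧ 0 < β ∧ ∃ p : ℕ, ∀ (a : A) (n : ℕ), p < n →
        α * lam ^ n ≤ ((substIter ρ n a).map (Set.indicator U fun _ => (1 : ℝ))).sum ∧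
        ((substIter ρ n a).map (Set.indicator U fun _ => (1 : ℝ))).sum ≤ β * lam ^ n := by
  obtain ⟨a₀, -, hmin⟩ := isCompact_univ.exists_isMinOn Set.univ_nonempty
    l.continuous.continuousOn
  obtain ⟨a₁, -, hmax⟩ := isCompact_univ.exists_isMaxOn Set.univ_nonempty
    l.continuous.continuousOn
  set c := l a₀ with hc_def
  set C := l a₁ with hC_def
  have hc : 0 < c := hpos a₀
  have hC : 0 < C := hpos a₁
  have hlow : ∀ a : A, c ≤ l a := fun a => hmin (Set.mem_univ a)
  have hhigh : ∀ a : A, l a ≤ C := fun a => hmax (Set.mem_univ a)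
  have hlam0 : (0 : ℝ) < lam := by linarith
  have heig' : ∀ a : A, ((ρ a).map (fun b => l b)).sum = lam * l a := heig
  have key : ∀ (a : A) (n : ℕ),
      (c / C) * lam ^ n ≤ ((substIter ρ n a).length : ℝ) ∧
      ((substIter ρ n a).length : ℝ) ≤ (C / c) * lam ^ n := by
    intro a n
    have hsum := sum_substIter ρ (fun b => l b) lam heig' n a
    have hbd := sum_map_bounds (fun b => l b) c C hlow hhigh (substIter ρ n a)
    have hpow : (0 : ℝ) < lam ^ n := pow_pos hlam0 n
    have h1 : c * lam ^ n ≤ lam ^ n * l a := by nlinarith [hlow a]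
    have h2 : lam ^ n * l a ≤ C * lam ^ n := by nlinarith [hhigh a]
    constructor
    · rw [div_mul_eq_mul_div, div_le_iff₀ hC]
      nlinarith [hbd.2, hsum]
    · rw [div_mul_eq_mul_div, le_div_iff₀ hc]
      nlinarith [hbd.1, hsum]
  refine ⟨⟨c / C, C / c, div_pos hc hC, div_pos hC hc, key⟩, ?_⟩
  intro U hU hUne
  obtain ⟨p, hp⟩ := hprim U hU hUne
  set g := Set.indicator U (fun _ => (1 : ℝ)) with hg_def
  have hg0 : ∀ a : A, 0 ≤ g a := fun a => Set.indicator_nonneg (fun _ _ => zero_le_one) a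
  have hg1 : ∀ a : A, g a ≤ 1 := by
    intro a
    by_cases h : a ∈ U <;> simp [hg_def, Set.indicator, h]
  have hplam : (0 : ℝ) < lam ^ p := pow_pos hlam0 p
  set β := C / c with hβ_def
  have hβ : 0 < β := div_pos hC hc
  have hcount1 : ∀ b : A, (1 : ℝ) ≤ ((substIter ρ p b).map g).sum := by
    intro b
    obtain ⟨x, hx, hxU⟩ := hp b
    have hmem : g x ∈ (substIter ρ p b).map g := List.mem_map_of_mem hx
    have hgx : g x = 1 := by simp [hg_def, Set.indicator, hxU]
    have := List.single_le_sum (l := (substIter ρ p b).map g)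
      (by intro y hy; obtain ⟨z, -, rfl⟩ := List.mem_map.1 hy; exact hg0 z) _ hmem
    linarith [this, hgx.symm ▸ this]
  have hcountC : ∀ b : A, ((substIter ρ p b).map g).sum ≤ β * lam ^ p := by
    intro b
    have hbd := sum_map_bounds g 0 1 hg0 hg1 (substIter ρ p b)
    have := (key b p).2
    calc ((substIter ρ p b).map g).sum ≤ 1 * ((substIter ρ p b).length : ℝ) := hbd.2
      _ = ((substIter ρ p b).length : ℝ) := one_mul _
      _ ≤ β * lam ^ p := this
  refine ⟨(c / C) / lam ^ p, β * β, div_pos (div_pos hc hC) hplam,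
    mul_pos hβ hβ, p, ?_⟩
  intro a n hn
  set m := n - p with hm_def
  have hnm : n = p + m := by omega
  have hpow : lam ^ n = lam ^ p * lam ^ m := by rw [hnm, pow_add]
  have hmlam : (0 : ℝ) < lam ^ m := pow_pos hlam0 m
  have hdecomp : substIter ρ n a = (substIter ρ m a).flatMap (substIter ρ p) := by
    rw [hnm]; exact substIter_add ρ p m a
  have hsplit : ((substIter ρ n a).map g).sum =
      ((substIter ρ m a).map (fun b => ((substIter ρ p b).map g).sum)).sum := by
    rw [hdecomp, sum_map_flatMap]
  have hbd := sum_map_bounds (fun b => ((substIter ρ p b).map g).sum) 1 (β * lam ^ p)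
    hcount1 hcountC (substIter ρ m a)
  have hkm := key a m
  constructor
  · have h1 : (c / C) * lam ^ m ≤ ((substIter ρ n a).map g).sum := by
      rw [hsplit]
      calc (c / C) * lam ^ m ≤ ((substIter ρ m a).length : ℝ) := hkm.1
        _ = 1 * ((substIter ρ m a).length : ℝ) := (one_mul _).symm
        _ ≤ _ := hbd.1
    rw [hpow]
    calc (c / C) / lam ^ p * (lam ^ p * lam ^ m)
        = (c / C) * lam ^ m := by field_simp
      _ ≤ _ := h1
  · rw [hsplit, hpow]
    calc ((substIter ρ m a).map (fun b => ((substIter ρ p b).map g).sum)).sum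
        ≤ (β * lam ^ p) * ((substIter ρ m a).length : ℝ) := hbd.2
      _ ≤ (β * lam ^ p) * (β * lam ^ m) := by
          apply mul_le_mul_of_nonneg_left hkm.2 (le_of_lt (mul_pos hβ hplam))
      _ = β * β * (lam ^ p * lam ^ m) := by ring
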